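/- Let f : ℕ → ℂ be an arithmetic function, k a positive integer, and p > 0 a real number. Suppose there exist constants C > 0 and α with max(0, p−k) < α < p such that |S_k(x,t)| ≤ C·x^α for all real x ≥ 1 and all t ∈ ℝ. Then the Hausdorff dimension of the image F_{k,p}([0,1]) = {F_{k,p}(t) : t ∈ [0,1]} ⊂ ℂ is at most k/(p−α). -/

import Mathlib

/-!
Abel summation turns the uniform bound `‖S_k(N, t)‖ ≤ C N^α` into two estimates for the partial
sums `F_N` of `F = F_{k,p}`. First, the tail satisfies `‖F(t) - F_N(t)‖ = O(N^(α-p))`. Second,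
`∂ₜ S_k(N, t) = 2πi ∑ n^k f(n) e(n^k t)` is `O(N^(α+k))` by a further Abel summation against the
increasing weights `n^k`, so `S_k(N, ·)` and hence `F_N` are Lipschitz with constants `O(N^(α+k))`
and `O(N^(α+k-p))`. Choosing `N ≈ |t - s|^(-1/k)` balances the two errors, so `F` is Hölder of
exponent `(p - α)/k` on `[0, 1]`, and a Hölder map of exponent `r` multiplies Hausdorff dimension
by at most `1/r`.
-/

open Filter Finset Topology Real

section RpowEstimates

theorem one_sub_mul_le_one_add_rpow_neg {s p : ℝ} (hs : -1 < s) (hp : 0 ≤ p) :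
    1 - p * s ≤ (1 + s) ^ (-p) := by
  have h1s : 0 < 1 + s := by linarith
  have hlog : log (1 + s) ≤ s := by linarith [log_le_sub_one_of_pos h1s]
  rw [rpow_def_of_pos h1s]
  nlinarith [add_one_le_exp (log (1 + s) * -p)]

theorem rpow_neg_sub_rpow_neg_add_one_le {x p : ℝ} (hx : 0 < x) (hp : 0 ≤ p) :
    x ^ (-p) - (x + 1) ^ (-p) ≤ p * x ^ (-p - 1) := by
  have hsplit : (x + 1) ^ (-p) = x ^ (-p) * (1 + x⁻¹) ^ (-p) := by
    rw [← mul_rpow hx.le (by positivity)]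
    congr 1
    field_simp
  have hbern := one_sub_mul_le_one_add_rpow_neg (by linarith [inv_pos.2 hx] : -1 < x⁻¹) hp
  rw [hsplit, rpow_sub_one hx.ne', div_eq_mul_inv]
  nlinarith [rpow_pos_of_pos hx (-p)]

theorem mul_rpow_neg_sub_one_le_rpow_neg_sub {x p : ℝ} (hx : 0 < x) (hp : 0 ≤ p) :
    p * (x + 1) ^ (-p - 1) ≤ x ^ (-p) - (x + 1) ^ (-p) := by
  have hx1 : 0 < x + 1 := by linarith
  have hsplit : x ^ (-p) = (x + 1) ^ (-p) * (1 + -(x + 1)⁻¹) ^ (-p) := by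
    rw [← mul_rpow hx1.le (by field_simp; linarith)]
    congr 1
    field_simp
    ring
  have hbern := one_sub_mul_le_one_add_rpow_neg
    (by have := inv_lt_one_of_one_lt₀ (by linarith : 1 < x + 1); linarith : -1 < -(x + 1)⁻¹) hp
  rw [hsplit, rpow_sub_one hx1.ne', div_eq_mul_inv]
  nlinarith [rpow_pos_of_pos hx1 (-p)]

theorem mul_rpow_sub_one_le_rpow_sub {x γ : ℝ} (hx : 0 ≤ x) (hγ0 : 0 ≤ γ) (hγ1 : γ ≤ 1) :
    γ * (x + 1) ^ (γ - 1) ≤ (x + 1) ^ γ - x ^ γ := by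
  have hx1 : 0 < x + 1 := by linarith
  have hsplit : x ^ γ = (x + 1) ^ γ * (1 + -(x + 1)⁻¹) ^ γ := by
    rw [← mul_rpow hx1.le (by field_simp; linarith)]
    congr 1
    field_simp
    ring
  have hbern := rpow_one_add_le_one_add_mul_self
    (by have := inv_le_one_of_one_le₀ (by linarith : 1 ≤ x + 1); linarith : -1 ≤ -(x + 1)⁻¹) hγ0 hγ1
  rw [hsplit, rpow_sub_one hx1.ne', div_eq_mul_inv]
  nlinarith [rpow_pos_of_pos hx1 γ]

theorem sum_Icc_rpow_sub_one_le {γ : ℝ} (hγ : 0 < γ) (N : ℕ) :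
    ∑ n ∈ Icc 1 N, (n : ℝ) ^ (γ - 1) ≤ N ^ γ / min γ 1 := by
  rcases le_total 1 γ with h | h
  · rw [min_eq_right h, div_one]
    calc ∑ n ∈ Icc 1 N, (n : ℝ) ^ (γ - 1) ≤ ∑ n ∈ Icc 1 N, (N : ℝ) ^ (γ - 1) :=
          sum_le_sum fun n hn => rpow_le_rpow n.cast_nonneg
            (by exact_mod_cast (mem_Icc.1 hn).2) (by linarith)
      _ = N ^ γ := by
          rw [sum_const, Nat.card_Icc, add_tsub_cancel_right, nsmul_eq_mul, mul_comm,
            ← rpow_add_one' N.cast_nonneg (by linarith), sub_add_cancel]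
  · rw [min_eq_left h, le_div_iff₀ hγ]
    induction N with
    | zero => simp [zero_rpow hγ.ne']
    | succ N ih =>
      rw [sum_Icc_succ_top (by omega), add_mul]
      have := mul_rpow_sub_one_le_rpow_sub N.cast_nonneg hγ.le h
      push_cast
      linarith

theorem sum_Ioc_rpow_neg_sub_one_le {c : ℝ} (hc : 0 < c) {M : ℕ} (hM : 1 ≤ M) (N : ℕ) :
    ∑ n ∈ Ioc M N, (n : ℝ) ^ (-c - 1) ≤ M ^ (-c) / c := by
  rcases lt_or_ge N M with hNM | hMN
  · rw [Ioc_eq_empty (by omega), sum_empty]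
    positivity
  rw [le_div_iff₀ hc]
  suffices ∑ n ∈ Ioc M N, (n : ℝ) ^ (-c - 1) * c ≤ M ^ (-c) - N ^ (-c) by
    rw [sum_mul]; linarith [rpow_nonneg N.cast_nonneg (-c)]
  induction N, hMN using Nat.le_induction with
  | base => simp
  | succ N hMN ih =>
    have hN : (0 : ℝ) < N := by exact_mod_cast hM.trans hMN
    rw [sum_Ioc_succ_top hMN]
    have := mul_rpow_neg_sub_one_le_rpow_neg_sub hN hc.le
    push_cast
    linarith

theorem rpow_mul_abs_rpow_neg_sub_le {x p : ℝ} (hx : 0 < x) (hp : 0 ≤ p) (β : ℝ) :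
    x ^ β * |x ^ (-p) - (x + 1) ^ (-p)| ≤ p * x ^ (β - p - 1) := by
  rw [abs_of_nonneg (sub_nonneg.2 (rpow_le_rpow_of_nonpos hx (by linarith) (by linarith)))]
  calc x ^ β * (x ^ (-p) - (x + 1) ^ (-p)) ≤ x ^ β * (p * x ^ (-p - 1)) :=
        mul_le_mul_of_nonneg_left (rpow_neg_sub_rpow_neg_add_one_le hx hp) (by positivity)
    _ = p * x ^ (β - p - 1) := by rw [mul_left_comm, ← rpow_add hx]; ring_nf

theorem rpow_mul_rpow_neg_add_one_le {x p : ℝ} (hx : 0 < x) (hp : 0 ≤ p) (β : ℝ) :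
    x ^ β * (x + 1) ^ (-p) ≤ x ^ (β - p) := by
  rw [sub_eq_add_neg, rpow_add hx]
  exact mul_le_mul_of_nonneg_left (rpow_le_rpow_of_nonpos hx (by linarith) (by linarith))
    (rpow_nonneg hx.le β)

end RpowEstimates

section AbelSummation

variable {M N : ℕ}

theorem sum_Ioc_mul_by_parts (c b : ℕ → ℂ) (hMN : M ≤ N) :
    ∑ n ∈ Ioc M N, c n * b n =
      ∑ n ∈ Ioc M N, (∑ m ∈ Icc 1 n, c m) * (b n - b (n + 1))
        + (∑ m ∈ Icc 1 N, c m) * b (N + 1) - (∑ m ∈ Icc 1 M, c m) * b (M + 1) := by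
  induction N, hMN using Nat.le_induction with
  | base => simp
  | succ N hMN ih =>
    rw [sum_Ioc_succ_top hMN, sum_Ioc_succ_top hMN, ih, sum_Icc_succ_top (by omega)]
    ring

theorem norm_sum_Ioc_mul_le (c : ℕ → ℂ) (b : ℕ → ℝ) {a : ℕ → ℝ} (hMN : M ≤ N)
    (ha : ∀ n ∈ Icc M N, ‖∑ m ∈ Icc 1 n, c m‖ ≤ a n) :
    ‖∑ n ∈ Ioc M N, c n * b n‖ ≤
      ∑ n ∈ Ioc M N, a n * |b n - b (n + 1)| + a N * |b (N + 1)| + a M * |b (M + 1)| := by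
  have hterm : ∀ n ∈ Icc M N, ∀ x : ℝ, ‖(∑ m ∈ Icc 1 n, c m) * x‖ ≤ a n * |x| := fun n hn x => by
    rw [norm_mul, Complex.norm_real, Real.norm_eq_abs]
    exact mul_le_mul_of_nonneg_right (ha n hn) (abs_nonneg x)
  have hsum : ‖∑ n ∈ Ioc M N, (∑ m ∈ Icc 1 n, c m) * ((b n : ℂ) - b (n + 1))‖ ≤
      ∑ n ∈ Ioc M N, a n * |b n - b (n + 1)| := by
    refine (norm_sum_le _ _).trans (sum_le_sum fun n hn => ?_)
    exact_mod_cast hterm n (Ioc_subset_Icc_self hn) (b n - b (n + 1))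
  rw [sum_Ioc_mul_by_parts c (fun n => (b n : ℂ)) hMN]
  refine (norm_sub_le _ _).trans (add_le_add ((norm_add_le _ _).trans (add_le_add hsum ?_)) ?_)
  · exact hterm N (right_mem_Icc.2 hMN) _
  · exact hterm M (left_mem_Icc.2 hMN) _

theorem norm_sum_Icc_mul_le_of_monotone (c : ℕ → ℂ) {b : ℕ → ℝ} (hb : Monotone b)
    (hb1 : 0 ≤ b 1) {A : ℝ} (hA : ∀ n ≤ N, ‖∑ m ∈ Icc 1 n, c m‖ ≤ A) :
    ‖∑ n ∈ Icc 1 N, c n * b n‖ ≤ 2 * A * b (N + 1) := by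
  have habs : ∀ n, |b n - b (n + 1)| = b (n + 1) - b n := fun n => by
    rw [abs_sub_comm, abs_of_nonneg (sub_nonneg.2 (hb n.le_succ))]
  have hA0 : 0 ≤ A := (norm_nonneg _).trans (hA 0 N.zero_le)
  have htel : ∑ n ∈ Ioc 0 N, A * |b n - b (n + 1)| = A * (b (N + 1) - b 1) := by
    rcases N.eq_zero_or_pos with rfl | hN
    · simp
    · rw [← Icc_add_one_left_eq_Ioc, zero_add, ← mul_sum]
      simp_rw [habs]
      rw [sum_Icc_sub (show 1 ≤ N from hN)]
  have hbN : 0 ≤ b (N + 1) := hb1.trans (hb (by omega))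
  calc ‖∑ n ∈ Icc 1 N, c n * b n‖ = ‖∑ n ∈ Ioc 0 N, c n * b n‖ := rfl
    _ ≤ ∑ n ∈ Ioc 0 N, A * |b n - b (n + 1)| + A * |b (N + 1)| + A * |b (0 + 1)| :=
      norm_sum_Ioc_mul_le c b N.zero_le fun n hn => hA n (mem_Icc.1 hn).2
    _ = 2 * A * b (N + 1) := by rw [htel, abs_of_nonneg hbN, zero_add, abs_of_nonneg hb1]; ring

end AbelSummation

section WeightedSums

variable {c : ℕ → ℂ} {G : ℝ} {N : ℕ}

theorem norm_sum_Icc_mul_pow_le (k : ℕ) (hN : 1 ≤ N) (hc : ∀ n ≤ N, ‖∑ m ∈ Icc 1 n, c m‖ ≤ G) :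
    ‖∑ n ∈ Icc 1 N, c n * (n : ℂ) ^ k‖ ≤ 2 ^ (k + 1) * G * (N : ℝ) ^ k := by
  have hG : 0 ≤ G := (norm_nonneg _).trans (hc 0 N.zero_le)
  have hmono : Monotone fun n : ℕ => (n : ℝ) ^ k := fun m n hmn => by
    dsimp only; gcongr
  have := norm_sum_Icc_mul_le_of_monotone c hmono (by positivity) hc
  push_cast at this
  calc _ ≤ 2 * G * ((N : ℝ) + 1) ^ k := this
    _ ≤ 2 * G * (2 * N) ^ k := by gcongr; linarith [(show (1 : ℝ) ≤ N by exact_mod_cast hN)]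
    _ = 2 ^ (k + 1) * G * (N : ℝ) ^ k := by ring

theorem nonneg_of_norm_partialSum_le_rpow {β : ℝ}
    (hc : ∀ n, ‖∑ m ∈ Icc 1 n, c m‖ ≤ G * (n : ℝ) ^ β) : 0 ≤ G := by
  simpa using (norm_nonneg _).trans (hc 1)

theorem norm_sum_Icc_mul_rpow_neg_le {β p : ℝ} (hp : 0 ≤ p) (hpβ : p < β)
    (hc : ∀ n, ‖∑ m ∈ Icc 1 n, c m‖ ≤ G * (n : ℝ) ^ β) (hN : 1 ≤ N) :
    ‖∑ n ∈ Icc 1 N, c n * ((n : ℝ) ^ (-p) : ℝ)‖ ≤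
      G * (p / min (β - p) 1 + 1) * (N : ℝ) ^ (β - p) := by
  have hG := nonneg_of_norm_partialSum_le_rpow hc
  have hNpos : (0 : ℝ) < N := by exact_mod_cast hN
  have hterm : ∀ n ∈ Ioc 0 N, G * (n : ℝ) ^ β * |(n : ℝ) ^ (-p) - ((n + 1 : ℕ) : ℝ) ^ (-p)| ≤
      G * p * (n : ℝ) ^ (β - p - 1) := fun n hn => by
    have hn : (0 : ℝ) < n := by exact_mod_cast (mem_Ioc.1 hn).1
    push_cast
    rw [mul_assoc, mul_assoc]
    exact mul_le_mul_of_nonneg_left (rpow_mul_abs_rpow_neg_sub_le hn hp β) hG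
  have hlast : G * (N : ℝ) ^ β * |((N + 1 : ℕ) : ℝ) ^ (-p)| ≤ G * (N : ℝ) ^ (β - p) := by
    push_cast
    rw [abs_of_nonneg (by positivity), mul_assoc]
    exact mul_le_mul_of_nonneg_left (rpow_mul_rpow_neg_add_one_le hNpos hp β) hG
  calc ‖∑ n ∈ Icc 1 N, c n * ((n : ℝ) ^ (-p) : ℝ)‖
      ≤ _ := norm_sum_Ioc_mul_le c (fun n => (n : ℝ) ^ (-p)) N.zero_le fun n _ => hc n
    _ ≤ G * p * ∑ n ∈ Icc 1 N, (n : ℝ) ^ (β - p - 1) + G * (N : ℝ) ^ (β - p) + 0 := by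
        gcongr ?_ + ?_ + ?_
        · rw [mul_sum]
          exact sum_le_sum hterm
        · exact hlast
        · simp [zero_rpow (by linarith : β ≠ 0)]
    _ ≤ G * p * ((N : ℝ) ^ (β - p) / min (β - p) 1) + G * (N : ℝ) ^ (β - p) + 0 := by
        gcongr
        exact sum_Icc_rpow_sub_one_le (by linarith) N
    _ = G * (p / min (β - p) 1 + 1) * (N : ℝ) ^ (β - p) := by ring

theorem norm_sum_Ioc_mul_rpow_neg_le {α p : ℝ} (hp : 0 ≤ p) (hαp : α < p)
    (hc : ∀ n, ‖∑ m ∈ Icc 1 n, c m‖ ≤ G * (n : ℝ) ^ α) {M : ℕ} (hM : 1 ≤ M) (hMN : M ≤ N) :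
    ‖∑ n ∈ Ioc M N, c n * ((n : ℝ) ^ (-p) : ℝ)‖ ≤ G * (p / (p - α) + 2) * (M : ℝ) ^ (α - p) := by
  have hG := nonneg_of_norm_partialSum_le_rpow hc
  have hMpos : (0 : ℝ) < M := by exact_mod_cast hM
  have hterm : ∀ n ∈ Ioc M N, G * (n : ℝ) ^ α * |(n : ℝ) ^ (-p) - ((n + 1 : ℕ) : ℝ) ^ (-p)| ≤
      G * p * (n : ℝ) ^ (-(p - α) - 1) := fun n hn => by
    have hn : (0 : ℝ) < n := by exact_mod_cast hM.trans (mem_Ioc.1 hn).1.le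
    push_cast
    rw [mul_assoc, mul_assoc, show -(p - α) - 1 = α - p - 1 by ring]
    exact mul_le_mul_of_nonneg_left (rpow_mul_abs_rpow_neg_sub_le hn hp α) hG
  have hboundary : ∀ L : ℕ, M ≤ L → G * (L : ℝ) ^ α * |((L + 1 : ℕ) : ℝ) ^ (-p)| ≤
      G * (M : ℝ) ^ (α - p) := fun L hL => by
    have hLpos : (0 : ℝ) < L := hMpos.trans_le (by exact_mod_cast hL)
    push_cast
    rw [abs_of_nonneg (by positivity), mul_assoc]
    refine mul_le_mul_of_nonneg_left ((rpow_mul_rpow_neg_add_one_le hLpos hp α).trans ?_) hG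
    exact rpow_le_rpow_of_nonpos hMpos (by exact_mod_cast hL) (by linarith)
  calc ‖∑ n ∈ Ioc M N, c n * ((n : ℝ) ^ (-p) : ℝ)‖
      ≤ _ := norm_sum_Ioc_mul_le c (fun n => (n : ℝ) ^ (-p)) hMN fun n _ => hc n
    _ ≤ G * p * ((M : ℝ) ^ (-(p - α)) / (p - α)) + G * (M : ℝ) ^ (α - p)
        + G * (M : ℝ) ^ (α - p) := by
        gcongr ?_ + ?_ + ?_
        · refine (sum_le_sum hterm).trans ?_
          rw [← mul_sum]
          gcongr
          exact sum_Ioc_rpow_neg_sub_one_le (by linarith) hM N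
        · exact hboundary N hMN
        · exact hboundary M le_rfl
    _ = G * (p / (p - α) + 2) * (M : ℝ) ^ (α - p) := by rw [neg_sub]; ring

end WeightedSums

section ExponentialSums

noncomputable def expTerm (f : ℕ → ℂ) (k : ℕ) (t : ℝ) (n : ℕ) : ℂ :=
  f n * Complex.exp (2 * Real.pi * Complex.I * ((n : ℂ) ^ k) * (t : ℂ))

noncomputable def expSum (f : ℕ → ℂ) (k : ℕ) (t : ℝ) (N : ℕ) : ℂ :=
  ∑ n ∈ Icc 1 N, expTerm f k t n

noncomputable def fourierPartialSum (f : ℕ → ℂ) (k : ℕ) (p t : ℝ) (N : ℕ) : ℂ :=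
  ∑ n ∈ Icc 1 N, expTerm f k t n / (((n : ℝ) ^ p : ℝ) : ℂ)

variable {f : ℕ → ℂ} {k : ℕ} {C α p : ℝ}

theorem hasDerivAt_expSum (f : ℕ → ℂ) (k N : ℕ) (t : ℝ) :
    HasDerivAt (fun u => expSum f k u N)
      (2 * π * Complex.I * ∑ n ∈ Icc 1 N, expTerm f k t n * (n : ℂ) ^ k) t := by
  unfold expSum expTerm
  rw [mul_sum]
  refine HasDerivAt.fun_sum fun n _ => ?_
  have h := (((hasDerivAt_id t).ofReal_comp.const_mul
    (2 * π * Complex.I * (n : ℂ) ^ k)).cexp).const_mul (f n)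
  refine h.congr_deriv ?_
  push_cast [id]
  ring

theorem norm_expSum_sub_le (hα : 0 ≤ α) (hA : ∀ t n, ‖expSum f k t n‖ ≤ C * (n : ℝ) ^ α)
    {N : ℕ} (hN : 1 ≤ N) (t s : ℝ) :
    ‖expSum f k t N - expSum f k s N‖ ≤ 2 * π * 2 ^ (k + 1) * C * (N : ℝ) ^ (α + k) * |t - s| := by
  have hC : 0 ≤ C := nonneg_of_norm_partialSum_le_rpow (hA 0)
  have hNpos : (0 : ℝ) < N := by exact_mod_cast hN
  have hderiv_le : ∀ u : ℝ, ‖2 * π * Complex.I * ∑ n ∈ Icc 1 N, expTerm f k u n * (n : ℂ) ^ k‖ ≤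
      2 * π * 2 ^ (k + 1) * C * (N : ℝ) ^ (α + k) := fun u => by
    have hpartial : ∀ n ≤ N, ‖∑ m ∈ Icc 1 n, expTerm f k u m‖ ≤ C * (N : ℝ) ^ α := fun n hn =>
      (hA u n).trans (by gcongr)
    rw [norm_mul, rpow_add hNpos, rpow_natCast]
    have h2πI : ‖2 * (π : ℂ) * Complex.I‖ = 2 * π := by simp [abs_of_pos pi_pos]
    rw [h2πI]
    calc 2 * π * ‖∑ n ∈ Icc 1 N, expTerm f k u n * (n : ℂ) ^ k‖
        ≤ 2 * π * (2 ^ (k + 1) * (C * (N : ℝ) ^ α) * (N : ℝ) ^ k) := by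
          gcongr; exact norm_sum_Icc_mul_pow_le k hN hpartial
      _ = _ := by ring
  have := Convex.norm_image_sub_le_of_norm_hasDerivWithin_le
    (fun u _ => (hasDerivAt_expSum f k N u).hasDerivWithinAt) (fun u _ => hderiv_le u)
    convex_univ (Set.mem_univ s) (Set.mem_univ t)
  rwa [Real.norm_eq_abs] at this

theorem fourierPartialSum_eq_sum_mul (f : ℕ → ℂ) (k : ℕ) (p t : ℝ) (N : ℕ) :
    fourierPartialSum f k p t N = ∑ n ∈ Icc 1 N, expTerm f k t n * ((n : ℝ) ^ (-p) : ℝ) := by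
  refine sum_congr rfl fun n _ => ?_
  rw [rpow_neg n.cast_nonneg, Complex.ofReal_inv, div_eq_mul_inv]

theorem norm_fourierPartialSum_sub_le (hα : 0 ≤ α) (hp : 0 ≤ p) (hαk : p < α + k)
    (hA : ∀ t n, ‖expSum f k t n‖ ≤ C * (n : ℝ) ^ α) {N : ℕ} (hN : 1 ≤ N) (t s : ℝ) :
    ‖fourierPartialSum f k p t N - fourierPartialSum f k p s N‖ ≤
      2 * π * 2 ^ (k + 1) * C * |t - s| * (p / min (α + k - p) 1 + 1) * (N : ℝ) ^ (α + k - p) := by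
  have hpartial : ∀ n, ‖∑ m ∈ Icc 1 n, (expTerm f k t m - expTerm f k s m)‖ ≤
      2 * π * 2 ^ (k + 1) * C * |t - s| * (n : ℝ) ^ (α + k) := fun n => by
    rcases n.eq_zero_or_pos with rfl | hn
    · simp [zero_rpow (by linarith : α + k ≠ 0)]
    · rw [sum_sub_distrib]
      have := norm_expSum_sub_le hα hA hn t s
      unfold expSum at this
      linarith
  rw [fourierPartialSum_eq_sum_mul, fourierPartialSum_eq_sum_mul, ← sum_sub_distrib]
  simp_rw [← sub_mul]
  exact norm_sum_Icc_mul_rpow_neg_le hp hαk hpartial hN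

theorem norm_sub_fourierPartialSum_le (hp : 0 ≤ p) (hαp : α < p)
    (hA : ∀ t n, ‖expSum f k t n‖ ≤ C * (n : ℝ) ^ α) {t : ℝ} {z : ℂ}
    (hz : Tendsto (fourierPartialSum f k p t) atTop (𝓝 z)) {M : ℕ} (hM : 1 ≤ M) :
    ‖z - fourierPartialSum f k p t M‖ ≤ C * (p / (p - α) + 2) * (M : ℝ) ^ (α - p) := by
  refine le_of_tendsto (hz.sub_const _).norm ((eventually_ge_atTop M).mono fun N hMN => ?_)
  have htail : fourierPartialSum f k p t N - fourierPartialSum f k p t M =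
      ∑ n ∈ Ioc M N, expTerm f k t n * ((n : ℝ) ^ (-p) : ℝ) := by
    rw [fourierPartialSum_eq_sum_mul, fourierPartialSum_eq_sum_mul, sub_eq_iff_eq_add']
    exact (sum_Ioc_consecutive _ M.zero_le hMN).symm
  rw [htail]
  exact norm_sum_Ioc_mul_rpow_neg_le hp hαp (hA t) hM hMN

end ExponentialSums

theorem le_mul_rpow_of_forall_nat_le {x A B δ a b : ℝ} (hA : 0 ≤ A) (hB : 0 ≤ B) (ha : 0 < a)
    (hb : 0 ≤ b) (hδ : 0 < δ) (hδ1 : δ ≤ 1)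
    (h : ∀ N : ℕ, 1 ≤ N → x ≤ A * (N : ℝ) ^ (-a) + B * δ * (N : ℝ) ^ b) :
    x ≤ (A + 2 ^ b * B) * δ ^ (a / (a + b)) := by
  have hab : 0 < a + b := by linarith
  -- `N = ⌈δ^(-1/(a+b))⌉₊` makes both terms of size `δ^(a/(a+b))`.
  set y := δ ^ (-(a + b)⁻¹)
  have hy1 : 1 ≤ y :=
    one_le_rpow_of_pos_of_le_one_of_nonpos hδ hδ1 (neg_nonpos.2 (inv_nonneg.2 hab.le))
  have hyN : y ≤ ⌈y⌉₊ := Nat.le_ceil y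
  have hNy : (⌈y⌉₊ : ℝ) ≤ 2 * y := by linarith [Nat.ceil_lt_add_one (by linarith : 0 ≤ y)]
  have hya : y ^ (-a) = δ ^ (a / (a + b)) := by
    rw [← rpow_mul hδ.le]
    congr 1
    field_simp
  have hyb : δ * y ^ b = δ ^ (a / (a + b)) := by
    rw [← rpow_mul hδ.le]
    nth_rewrite 1 [← rpow_one δ]
    rw [← rpow_add hδ]
    congr 1
    field_simp
    ring
  calc x ≤ A * (⌈y⌉₊ : ℝ) ^ (-a) + B * δ * (⌈y⌉₊ : ℝ) ^ b :=
        h _ (Nat.one_le_iff_ne_zero.2 (Nat.ceil_pos.2 (by linarith)).ne')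
    _ ≤ A * y ^ (-a) + B * δ * (2 * y) ^ b := by
        gcongr A * ?_ + B * δ * ?_
        · exact rpow_le_rpow_of_nonpos (by linarith) hyN (by linarith)
        · exact rpow_le_rpow (Nat.cast_nonneg _) hNy hb
    _ = (A + 2 ^ b * B) * δ ^ (a / (a + b)) := by
        rw [mul_rpow zero_le_two (by linarith), hya, ← hyb]
        ring

theorem dimH_image_le_of_dist_le_rpow {X : Type*} [MetricSpace X] {F : ℝ → X} {s : Set ℝ}
    {K r : ℝ} (hr : 0 < r) (h : ∀ t ∈ s, ∀ u ∈ s, dist (F t) (F u) ≤ K * |t - u| ^ r) :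
    dimH (F '' s) ≤ ENNReal.ofReal r⁻¹ := by
  have hholder : HolderOnWith K.toNNReal r.toNNReal F s := fun t ht u hu => by
    rw [edist_dist, edist_dist, Real.dist_eq, Real.coe_toNNReal r hr.le,
      ENNReal.ofReal_rpow_of_nonneg (abs_nonneg _) hr.le, ← ENNReal.ofReal_coe_nnreal,
      ← ENNReal.ofReal_mul (by positivity)]
    exact ENNReal.ofReal_le_ofReal ((h t ht u hu).trans
      (mul_le_mul_of_nonneg_right (Real.le_coe_toNNReal K) (by positivity)))
  calc dimH (F '' s) ≤ dimH s / r.toNNReal := hholder.dimH_image_le (Real.toNNReal_pos.2 hr)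
    _ ≤ 1 / r.toNNReal := by
        gcongr
        exact (dimH_mono (Set.subset_univ s)).trans Real.dimH_univ.le
    _ = ENNReal.ofReal r⁻¹ := by rw [one_div, ENNReal.ofReal_inv_of_pos hr]; rfl

theorem exists_norm_sub_le_rpow_of_expSum_le {f : ℕ → ℂ} {k : ℕ} {C α p : ℝ} {F : ℝ → ℂ}
    (hα : 0 ≤ α) (hαk : p < α + k) (hαp : α < p)
    (hA : ∀ t n, ‖expSum f k t n‖ ≤ C * (n : ℝ) ^ α)
    (hF : ∀ t, Tendsto (fourierPartialSum f k p t) atTop (𝓝 (F t))) :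
    ∃ K, ∀ t s, |t - s| ≤ 1 → ‖F t - F s‖ ≤ K * |t - s| ^ ((p - α) / k) := by
  have hp : 0 ≤ p := by linarith
  have hC : 0 ≤ C := nonneg_of_norm_partialSum_le_rpow (hA 0)
  set A := 2 * (C * (p / (p - α) + 2))
  set B := 2 * π * 2 ^ (k + 1) * C * (p / min (α + k - p) 1 + 1)
  have hA0 : 0 ≤ A := by have := div_nonneg hp (sub_pos.2 hαp).le; positivity
  have hB0 : 0 ≤ B := by
    have := div_nonneg hp (lt_min (sub_pos.2 hαk) one_pos).le
    positivity
  refine ⟨A + 2 ^ (α + k - p) * B, fun t s hts => ?_⟩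
  rcases eq_or_ne t s with rfl | hne
  · simp [zero_rpow (div_pos (sub_pos.2 hαp) (by linarith : (0 : ℝ) < k)).ne']
  have hsplit : ∀ N : ℕ, 1 ≤ N →
      ‖F t - F s‖ ≤ A * (N : ℝ) ^ (-(p - α)) + B * |t - s| * (N : ℝ) ^ (α + k - p) := by
    intro N hN
    have htail_t := norm_sub_fourierPartialSum_le hp hαp hA (hF t) hN
    have htail_s := norm_sub_fourierPartialSum_le hp hαp hA (hF s) hN
    have hhead := norm_fourierPartialSum_sub_le hα hp hαk hA hN t s
    calc ‖F t - F s‖ = ‖(F t - fourierPartialSum f k p t N) + (fourierPartialSum f k p t N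
          - fourierPartialSum f k p s N) - (F s - fourierPartialSum f k p s N)‖ := by ring_nf
      _ ≤ _ := norm_sub_le_of_le (norm_add_le_of_le htail_t hhead) htail_s
      _ = _ := by rw [neg_sub]; ring
  have := le_mul_rpow_of_forall_nat_le hA0 hB0 (sub_pos.2 hαp) (by linarith)
    (abs_pos.2 (sub_ne_zero.2 hne)) hts hsplit
  rwa [show p - α + (α + k - p) = k by ring] at this

theorem stmt_8_general (f : ℕ → ℂ) (k : ℕ) (p : ℝ)
    (C α : ℝ) (hα : max 0 (p - (k : ℝ)) < α) (hαp : α < p)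
    (hS : ∀ x : ℝ, 1 ≤ x → ∀ t : ℝ,
      ‖∑ n ∈ Finset.Icc 1 ⌊x⌋₊,
        f n * Complex.exp (2 * Real.pi * Complex.I * ((n : ℂ) ^ k) * (t : ℂ))‖ ≤ C * x ^ α)
    (F : ℝ → ℂ)
    (hF : ∀ t : ℝ, Tendsto (fun N : ℕ => ∑ n ∈ Finset.Icc 1 N,
        f n * Complex.exp (2 * Real.pi * Complex.I * ((n : ℂ) ^ k) * (t : ℂ))
          / (((n : ℝ) ^ p : ℝ) : ℂ))
      atTop (𝓝 (F t))) :
    dimH (F '' Set.Icc (0 : ℝ) 1) ≤ ENNReal.ofReal ((k : ℝ) / (p - α)) := by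
  have hα0 : 0 < α := (le_max_left _ _).trans_lt hα
  have hαk : p < α + k := by linarith [(le_max_right 0 (p - (k : ℝ))).trans_lt hα]
  have hA : ∀ t n, ‖expSum f k t n‖ ≤ C * (n : ℝ) ^ α := fun t n => by
    rcases n.eq_zero_or_pos with rfl | hn
    · simp [expSum, zero_rpow hα0.ne']
    · simpa [expSum, expTerm] using hS n (by exact_mod_cast hn) t
  obtain ⟨K, hK⟩ := exists_norm_sub_le_rpow_of_expSum_le hα0.le hαk hαp hA hF
  have hdim := dimH_image_le_of_dist_le_rpow (s := Set.Icc 0 1)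
    (div_pos (sub_pos.2 hαp) (by linarith)) fun t ht s hs => (dist_eq_norm _ _).trans_le
      (hK t s (abs_sub_le_iff.2 ⟨by linarith [ht.2, hs.1], by linarith [ht.1, hs.2]⟩))
  rwa [inv_div] at hdim

/-- If `|S_k(x,t)| ≤ C x^α` uniformly with `max(0, p−k) < α < p`, then the
Hausdorff dimension of the image `F_{k,p}([0,1]) ⊂ ℂ` is at most `k/(p−α)`. -/
theorem stmt_8 (f : ℕ → ℂ) (k : ℕ) (hk : 1 ≤ k) (p : ℝ) (hp : 0 < p)
    (C α : ℝ) (hC : 0 < C) (hα : max 0 (p - (k : ℝ)) < α) (hαp : α < p)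
    (hS : ∀ x : ℝ, 1 ≤ x → ∀ t : ℝ,
      ‖∑ n ∈ Finset.Icc 1 ⌊x⌋₊,
        f n * Complex.exp (2 * Real.pi * Complex.I * ((n : ℂ) ^ k) * (t : ℂ))‖ ≤ C * x ^ α)
    (F : ℝ → ℂ)
    (hF : ∀ t : ℝ, Tendsto (fun N : ℕ => ∑ n ∈ Finset.Icc 1 N,
        f n * Complex.exp (2 * Real.pi * Complex.I * ((n : ℂ) ^ k) * (t : ℂ))
          / (((n : ℝ) ^ p : ℝ) : ℂ))
      atTop (𝓝 (F t))) :
    dimH (F '' Set.Icc (0 : ℝ) 1) ≤ ENNReal.ofReal ((k : ℝ) / (p - α)) :=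
  stmt_8_general f k p C α hα hαp hS F hF
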